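/- Let p > 1, a ∈ ℝ, R > 0, and let w : [0,R] → ℝ be continuously differentiable on (0,R) with w(0) = w(R) = 0 (and the relevant integrals finite). Then ∫₀ᴿ r^a |w'(r)|^p dr ≥ |(a+1-p)/p|^p ∫₀ᴿ r^{a-p} |w(r)|^p dr. -/

import Mathlib

open Real MeasureTheory Set

lemma hardy_young{p a : ℝ} (hp : 1 < p) (c r u v : ℝ) (hc : 0 ≤ c) (hr : 0 < r)
    (hu : 0 ≤ u) (hv : 0 ≤ v) :
    p * c ^ (p-1) * (r ^ (a+1-p) * (u ^ (p-1) * v)) ≤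
      r ^ a * v ^ p + (p-1) * (c ^ p * (r ^ (a-p) * u ^ p)) := by
  set q : ℝ := p / (p-1) with hq
  have hp1 : (0:ℝ) < p - 1 := by linarith
  have hp0 : (0:ℝ) < p := by linarith
  have hpq : p.HolderConjugate q := Real.HolderConjugate.conjExponent hp
  have key := Real.young_inequality_of_nonneg
    (a := r ^ (a/p) * v) (b := c ^ (p-1) * (r ^ ((a-p)*((p-1)/p)) * u ^ (p-1)))
    (by positivity) (by positivity) hpq
  have e1 : (r ^ (a/p) * v) ^ p = r ^ a * v ^ p := by
    rw [Real.mul_rpow (by positivity) hv, ← Real.rpow_mul hr.le]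
    congr 2
    field_simp
  have e2 : (c ^ (p-1) * (r ^ ((a-p)*((p-1)/p)) * u ^ (p-1))) ^ q
      = c ^ p * (r ^ (a-p) * u ^ p) := by
    rw [Real.mul_rpow (by positivity) (by positivity),
        Real.mul_rpow (by positivity) (by positivity),
        ← Real.rpow_mul hc, ← Real.rpow_mul hr.le, ← Real.rpow_mul hu]
    congr 2 <;> (rw [hq]; field_simp; try ring)
  have e3 : r ^ (a/p) * v * (c ^ (p-1) * (r ^ ((a-p)*((p-1)/p)) * u ^ (p-1)))
      = c ^ (p-1) * (r ^ (a+1-p) * (u ^ (p-1) * v)) := by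
    rw [show r ^ (a+1-p) = r ^ (a/p) * r ^ ((a-p)*((p-1)/p)) by
      rw [← Real.rpow_add hr]; congr 1; field_simp; ring]
    ring
  rw [e1, e2, e3] at key
  have := mul_le_mul_of_nonneg_left key hp0.le
  calc p * c ^ (p-1) * (r ^ (a+1-p) * (u ^ (p-1) * v))
      = p * (c ^ (p-1) * (r ^ (a+1-p) * (u ^ (p-1) * v))) := by ring
    _ ≤ p * (r ^ a * v ^ p / p + c ^ p * (r ^ (a-p) * u ^ p) / q) := this
    _ = r ^ a * v ^ p + (p-1) * (c ^ p * (r ^ (a-p) * u ^ p)) := by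
        rw [hq]; field_simp


lemma abs_deriv_bound {p : ℝ} (hp : 1 < p) (y : ℝ) :
    |p * |y| ^ (p-2) * y| ≤ p * |y| ^ (p-1) := by
  rcases eq_or_ne y 0 with rfl | hy
  · simp [abs_nonneg]
    positivity
  · have h1 : |y| ≠ 0 := abs_ne_zero.mpr hy
    rw [abs_mul, abs_mul, abs_of_pos (by linarith : (0:ℝ) < p),
      abs_rpow_of_nonneg (abs_nonneg y), abs_abs, mul_assoc,
      ← Real.rpow_add_one h1]
    ring_nf
    exact le_refl _


/-- One-dimensional weighted Hardy inequality on `(0,R)`: for `p > 1`, `a ∈ ℝ`,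
and `w` continuously differentiable on `(0,R)`, continuous on `[0,R]`, with
`w(0) = w(R) = 0` and both weighted integrals finite,
`∫₀ᴿ r^a |w'(r)|^p dr ≥ |(a+1-p)/p|^p ∫₀ᴿ r^(a-p) |w(r)|^p dr`. -/
theorem stmt_0 (p a R : ℝ) (hp : 1 < p) (hR : 0 < R)
    (w w' : ℝ → ℝ)
    (hderiv : ∀ r ∈ Ioo (0:ℝ) R, HasDerivAt w (w' r) r)
    (hw'cont : ContinuousOn w' (Ioo 0 R))
    (hwcont : ContinuousOn w (Icc 0 R))
    (hw0 : w 0 = 0) (hwR : w R = 0)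
    (hint1 : IntegrableOn (fun r => r ^ a * |w' r| ^ p) (Ioo 0 R))
    (hint2 : IntegrableOn (fun r => r ^ (a - p) * |w r| ^ p) (Ioo 0 R)) :
    ∫ r in Ioo (0:ℝ) R, r ^ a * |w' r| ^ p ≥
      |(a + 1 - p) / p| ^ p * ∫ r in Ioo (0:ℝ) R, r ^ (a - p) * |w r| ^ p := by
  have hp0 : (0:ℝ) < p := by linarith
  have hp1 : (0:ℝ) < p - 1 := by linarith
  set A := ∫ r in Ioo (0:ℝ) R, r ^ a * |w' r| ^ p with hA
  set B := ∫ r in Ioo (0:ℝ) R, r ^ (a - p) * |w r| ^ p with hB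
  have hAnn : 0 ≤ A := by
    apply setIntegral_nonneg measurableSet_Ioo
    intro r hr
    have : (0:ℝ) < r := hr.1
    positivity
  have hBnn : 0 ≤ B := by
    apply setIntegral_nonneg measurableSet_Ioo
    intro r hr
    have : (0:ℝ) < r := hr.1
    positivity
  by_cases hL0 : a + 1 - p = 0
  · rw [hL0]
    simp [Real.zero_rpow hp0.ne', hAnn]
  -- main case
  set L : ℝ := |(a + 1 - p) / p| with hLdef
  have hLpos : 0 < L := abs_pos.mpr (div_ne_zero hL0 hp0.ne')
  -- notation
  set g : ℝ → ℝ := fun r => r ^ (a - p) * |w r| ^ p with hg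
  set G : ℝ → ℝ := fun r => r ^ (a+1-p) * (p * |w r| ^ (p-2) * w r * w' r) with hG
  set H : ℝ → ℝ := fun r => r ^ (a+1-p) * (|w r| ^ (p-1) * |w' r|) with hH
  set F : ℝ → ℝ := fun r => r ^ (a+1-p) * |w r| ^ p with hF
  set F' : ℝ → ℝ := fun r => (a+1-p) * g r + G r with hF'
  -- measurability of w and G on (0,R)
  have hwm : AEMeasurable w (volume.restrict (Ioo (0:ℝ) R)) :=
    ((hwcont.mono Ioo_subset_Icc_self).aemeasurable measurableSet_Ioo)
  have hw'm : AEMeasurable w' (volume.restrict (Ioo (0:ℝ) R)) :=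
    (hw'cont.aemeasurable measurableSet_Ioo)
  have hrpow : ∀ b : ℝ, ContinuousOn (fun r : ℝ => r ^ b) (Ioo (0:ℝ) R) := by
    intro b r hr
    exact (Real.continuousAt_rpow_const r b (Or.inl hr.1.ne')).continuousWithinAt
  have measG : AEStronglyMeasurable G (volume.restrict (Ioo (0:ℝ) R)) := by
    apply AEMeasurable.aestronglyMeasurable
    exact (((hrpow (a+1-p)).aemeasurable measurableSet_Ioo).mul
      ((((aemeasurable_const.mul ((measurable_abs.pow measurable_const).comp_aemeasurable hwm)).mul
        hwm).mul hw'm)))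
  -- integrability of H
  have measH : AEStronglyMeasurable H (volume.restrict (Ioo (0:ℝ) R)) := by
    apply AEMeasurable.aestronglyMeasurable
    exact ((hrpow (a+1-p)).aemeasurable measurableSet_Ioo).mul
      (((measurable_abs.pow measurable_const).comp_aemeasurable hwm).mul
        (((measurable_abs).comp_aemeasurable hw'm)))
  have Hnn : ∀ r ∈ Ioo (0:ℝ) R, 0 ≤ H r := by
    intro r hr
    have : (0:ℝ) < r := hr.1
    have := Real.rpow_nonneg (abs_nonneg (w r)) (p-1)
    positivity
  have Hbound : ∀ r ∈ Ioo (0:ℝ) R, H r ≤ p⁻¹ * ((fun r => r ^ a * |w' r| ^ p) r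
      + (p-1) * g r) := by
    intro r hr
    have key := hardy_young (a := a) hp 1 r (|w r|) (|w' r|) zero_le_one hr.1
      (abs_nonneg _) (abs_nonneg _)
    rw [Real.one_rpow, Real.one_rpow, mul_one, one_mul] at key
    rw [le_inv_mul_iff₀ hp0]
    calc p * H r = p * 1 * (r ^ (a+1-p) * (|w r| ^ (p-1) * |w' r|)) := by rw [hH]; ring
      _ ≤ _ := by rw [mul_one]; exact key
  have intH : IntegrableOn H (Ioo (0:ℝ) R) := by
    apply Integrable.mono' (g := fun r => p⁻¹ * ((fun r => r ^ a * |w' r| ^ p) r + (p-1) * g r))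
    · exact ((hint1.add (hint2.const_mul (p-1))).const_mul p⁻¹)
    · exact measH
    · rw [ae_restrict_iff' measurableSet_Ioo]
      filter_upwards with r hr
      rw [Real.norm_eq_abs, abs_of_nonneg (Hnn r hr)]
      exact Hbound r hr
  -- |G| ≤ p * H
  have Gbound : ∀ r ∈ Ioo (0:ℝ) R, |G r| ≤ p * H r := by
    intro r hr
    have hr0 : (0:ℝ) < r := hr.1
    have h1 : (0:ℝ) ≤ r ^ (a+1-p) := (Real.rpow_pos_of_pos hr0 _).le
    rw [hG, hH]
    simp only
    rw [show r ^ (a+1-p) * (p * |w r| ^ (p-2) * w r * w' r)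
        = r ^ (a+1-p) * ((p * |w r| ^ (p-2) * w r) * w' r) by ring,
      abs_mul, abs_of_nonneg h1, abs_mul]
    calc r ^ (a+1-p) * (|p * |w r| ^ (p-2) * w r| * |w' r|)
        ≤ r ^ (a+1-p) * ((p * |w r| ^ (p-1)) * |w' r|) := by
          apply mul_le_mul_of_nonneg_left _ h1
          exact mul_le_mul_of_nonneg_right (abs_deriv_bound hp (w r)) (abs_nonneg _)
      _ = p * (r ^ (a+1-p) * (|w r| ^ (p-1) * |w' r|)) := by ring
  have intG : IntegrableOn G (Ioo (0:ℝ) R) := by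
    apply Integrable.mono' (g := fun r => p * H r) (intH.const_mul p) measG
    rw [ae_restrict_iff' measurableSet_Ioo]
    filter_upwards with r hr
    rw [Real.norm_eq_abs]
    exact Gbound r hr
  have intF' : IntegrableOn F' (Ioo (0:ℝ) R) := (hint2.const_mul (a+1-p)).add intG
  -- FTC on [ε, R]
  have ftc : ∀ ε, ε ∈ Ioo (0:ℝ) R → ∫ r in Ioo ε R, F' r = - F ε := by
    intro e he
    have he0 : 0 < e := he.1
    have heR : e < R := he.2
    have contF : ContinuousOn F (Icc e R) := by
      apply ContinuousOn.mul
      · intro r hr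
        have : r ≠ 0 := by have := hr.1; intro h; rw [h] at this; linarith
        exact (Real.continuousAt_rpow_const r _ (Or.inl this)).continuousWithinAt
      · apply ContinuousOn.rpow_const
        · exact (hwcont.mono (Icc_subset_Icc he0.le le_rfl)).abs
        · intro r _; exact Or.inr hp0.le
    have derF : ∀ r ∈ Ioo e R, HasDerivAt F (F' r) r := by
      intro r hr
      have hr' : r ∈ Ioo (0:ℝ) R := ⟨lt_trans he0 hr.1, hr.2⟩
      have h1 : HasDerivAt (fun s : ℝ => s ^ (a+1-p)) ((a+1-p) * r ^ (a+1-p-1)) r :=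
        Real.hasDerivAt_rpow_const (Or.inl hr'.1.ne')
      have h2 : HasDerivAt (fun s => |w s| ^ p) ((p * |w r| ^ (p-2) * w r) * w' r) r :=
        (hasDerivAt_abs_rpow (w r) hp).comp r (hderiv r hr')
      have h3 : HasDerivAt (fun s => s ^ (a+1-p) * |w s| ^ p) ((a+1-p) * r ^ (a+1-p-1) * |w r| ^ p + r ^ (a+1-p) * (p * |w r| ^ (p-2) * w r * w' r)) r := h1.mul h2
      convert h3 using 1
      rw [hF', hG, hg]
      simp only
      rw [show a+1-p-1 = a-p by ring]
      ring
    have intgr : IntervalIntegrable F' volume e R := by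
      rw [intervalIntegrable_iff_integrableOn_Ioo_of_le heR.le]
      exact intF'.mono_set (Ioo_subset_Ioo he0.le le_rfl)
    have heq := intervalIntegral.integral_eq_sub_of_hasDeriv_right_of_le heR.le contF
      (fun x hx => (derF x hx).hasDerivWithinAt) intgr
    rw [intervalIntegral.integral_of_le heR.le, MeasureTheory.integral_Ioc_eq_integral_Ioo] at heq
    rw [heq]
    have hFR : F R = 0 := by rw [hF]; simp [hwR, Real.zero_rpow hp0.ne']
    rw [hFR]; ring
  -- choose sequence ε n → 0 with F (ε n) → 0
  have seq : ∀ n : ℕ, ∃ ε : ℝ, ε ∈ Ioo (0:ℝ) (min R (1/(n+1))) ∧ ε * g ε < 1/(n+1) := by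
    intro n
    by_contra hcon
    push_neg at hcon
    set m := min R (1/((n:ℝ)+1)) with hm
    have hm0 : 0 < m := lt_min hR (by positivity)
    have hginteg : IntegrableOn (fun r : ℝ => r ^ (-1:ℝ)) (Ioo 0 m) := by
      apply Integrable.mono' (g := fun r => ((n:ℝ)+1) * g r)
      · exact ((hint2.mono_set (Ioo_subset_Ioo le_rfl (min_le_left _ _))).const_mul _)
      · exact (ContinuousOn.aestronglyMeasurable
          (fun r hr => (Real.continuousAt_rpow_const r _ (Or.inl hr.1.ne')).continuousWithinAt)
          measurableSet_Ioo)
      · rw [ae_restrict_iff' measurableSet_Ioo]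
        filter_upwards with r hr
        have hr0 : 0 < r := hr.1
        have h1 := hcon r hr
        have hg0 : 0 ≤ g r := by
          rw [hg]; simp only
          have := Real.rpow_nonneg hr0.le (a-p)
          positivity
        rw [Real.norm_eq_abs, abs_of_nonneg (Real.rpow_nonneg hr0.le _), Real.rpow_neg_one]
        have key : 1 ≤ (((n:ℝ)+1) * g r) * r := by
          calc (1:ℝ) = ((n:ℝ)+1) * (1/((n:ℝ)+1)) := by field_simp
            _ ≤ ((n:ℝ)+1) * (r * g r) := by
                apply mul_le_mul_of_nonneg_left h1 (by positivity)
            _ = (((n:ℝ)+1) * g r) * r := by ring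
        have h2 : r⁻¹ * r ≤ ((((n:ℝ)+1) * g r)) * r := by
          rw [inv_mul_cancel₀ hr0.ne']; exact key
        exact le_of_mul_le_mul_right h2 hr0
    rw [intervalIntegral.integrableOn_Ioo_rpow_iff hm0] at hginteg
    linarith
  choose ε hε1 hε2 using seq
  have hεpos : ∀ n, 0 < ε n := fun n => (hε1 n).1
  have hεR : ∀ n, ε n < R := fun n => lt_of_lt_of_le (hε1 n).2 (min_le_left _ _)
  have hεsmall : ∀ n, ε n < 1/((n:ℝ)+1) := fun n => lt_of_lt_of_le (hε1 n).2 (min_le_right _ _)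
  have keyint : ∫ r in Ioo (0:ℝ) R, F' r = 0 := by
    have tends1 : Filter.Tendsto (fun n => ∫ r in Ioo (ε n) R, F' r) Filter.atTop
        (nhds (∫ r in Ioo (0:ℝ) R, F' r)) := by
      have eqn : ∀ n, ∫ r in Ioo (ε n) R, F' r
          = ∫ r in Ioo (0:ℝ) R, (Ioi (ε n)).indicator F' r := by
        intro n
        have hset : Ioo (0:ℝ) R ∩ Ioi (ε n) = Ioo (ε n) R := by
          ext x
          simp only [mem_inter_iff, mem_Ioo, mem_Ioi]
          constructor
          · rintro ⟨⟨_, h2⟩, h3⟩; exact ⟨h3, h2⟩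
          · rintro ⟨h1, h2⟩; exact ⟨⟨(hεpos n).trans h1, h2⟩, h1⟩
        rw [MeasureTheory.setIntegral_indicator measurableSet_Ioi, hset]
      apply Filter.Tendsto.congr (fun n => (eqn n).symm)
      apply MeasureTheory.tendsto_integral_of_dominated_convergence (fun r => ‖F' r‖)
      · intro n
        exact intF'.1.indicator measurableSet_Ioi
      · exact intF'.norm
      · intro n
        filter_upwards with r
        exact norm_indicator_le_norm_self F' r
      · rw [ae_restrict_iff' measurableSet_Ioo]
        filter_upwards with r hr
        obtain ⟨N, hN⟩ := exists_nat_one_div_lt hr.1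
        have hev : (fun n => (Ioi (ε n)).indicator F' r) =ᶠ[Filter.atTop] fun _ => F' r := by
          filter_upwards [Filter.eventually_ge_atTop N] with n hn
          apply indicator_of_mem
          have h5 : 1/((n:ℝ)+1) ≤ 1/((N:ℝ)+1) := by
            apply one_div_le_one_div_of_le (by positivity)
            exact_mod_cast Nat.succ_le_succ hn
          exact lt_of_lt_of_le (hεsmall n) (le_trans h5 hN.le)
        exact Filter.Tendsto.congr' hev.symm tendsto_const_nhds
    have tends2 : Filter.Tendsto (fun n => ∫ r in Ioo (ε n) R, F' r) Filter.atTop (nhds 0) := by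
      have heqf : ∀ n, ∫ r in Ioo (ε n) R, F' r = - F (ε n) :=
        fun n => ftc (ε n) ⟨hεpos n, hεR n⟩
      simp_rw [heqf]
      rw [← neg_zero]
      apply Filter.Tendsto.neg
      have hFe : ∀ n, F (ε n) = ε n * g (ε n) := by
        intro n
        rw [hF, hg]
        simp only
        rw [show a+1-p = 1 + (a-p) by ring, Real.rpow_add (hεpos n), Real.rpow_one]
        ring
      apply squeeze_zero (g := fun n : ℕ => 1/((n:ℝ)+1))
      · intro n
        rw [hFe n]
        have h6 := hεpos n
        have h7 : 0 ≤ g (ε n) := by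
          rw [hg]; simp only
          have := Real.rpow_nonneg h6.le (a-p)
          positivity
        positivity
      · intro n
        rw [hFe n]
        exact (hε2 n).le
      · exact tendsto_one_div_add_atTop_nhds_zero_nat
    exact tendsto_nhds_unique tends1 tends2
  -- conclude
  have eq1 : (a+1-p) * B + ∫ r in Ioo (0:ℝ) R, G r = 0 := by
    rw [← integral_const_mul, ← integral_add (hint2.const_mul (a+1-p)) intG]
    exact keyint
  have eq2 : |∫ r in Ioo (0:ℝ) R, G r| = |a+1-p| * B := by
    have : ∫ r in Ioo (0:ℝ) R, G r = -((a+1-p) * B) := by linarith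
    rw [this, abs_neg, abs_mul, abs_of_nonneg hBnn]
  have ineq1 : |a+1-p| * B ≤ p * ∫ r in Ioo (0:ℝ) R, H r := by
    rw [← eq2, ← integral_const_mul]
    calc |∫ r in Ioo (0:ℝ) R, G r| ≤ ∫ r in Ioo (0:ℝ) R, |G r| := by
          simpa [Real.norm_eq_abs] using norm_integral_le_integral_norm (μ := volume.restrict (Ioo (0:ℝ) R)) G
      _ ≤ ∫ r in Ioo (0:ℝ) R, p * H r := by
          apply setIntegral_mono_on intG.abs (intH.const_mul p) measurableSet_Ioo
          exact Gbound
  have ineq2 : p * L^(p-1) * ∫ r in Ioo (0:ℝ) R, H r ≤ A + (p-1) * (L^p * B) := by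
    rw [← integral_const_mul]
    have : A + (p-1) * (L^p * B)
        = ∫ r in Ioo (0:ℝ) R, ((fun r => r ^ a * |w' r| ^ p) r + (p-1) * (L^p * g r)) := by
      rw [integral_add hint1 ((hint2.const_mul (L^p)).const_mul (p-1)), hA, hB,
        integral_const_mul, integral_const_mul]
    rw [this]
    apply setIntegral_mono_on (intH.const_mul _)
      (hint1.add (((hint2.const_mul (L^p)).const_mul (p-1)))) measurableSet_Ioo
    intro r hr
    have key := hardy_young (a := a) hp L r (|w r|) (|w' r|) hLpos.le hr.1
      (abs_nonneg _) (abs_nonneg _)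
    exact key
  -- finish: |a+1-p| = p * L
  have habs : |a+1-p| = p * L := by
    rw [hLdef, abs_div, abs_of_pos hp0]
    field_simp
  have hLp : L ^ p = L ^ (p-1) * L := by
    nth_rewrite 1 [show p = (p-1) + 1 by ring]
    rw [Real.rpow_add hLpos, Real.rpow_one]
  have hIH : 0 ≤ ∫ r in Ioo (0:ℝ) R, H r := setIntegral_nonneg measurableSet_Ioo Hnn
  have step : p * (L^p * B) ≤ A + (p-1) * (L^p * B) := by
    calc p * (L^p * B) = L^(p-1) * (|a+1-p| * B) := by rw [habs, hLp]; ring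
      _ ≤ L^(p-1) * (p * ∫ r in Ioo (0:ℝ) R, H r) := by
          apply mul_le_mul_of_nonneg_left ineq1 (Real.rpow_nonneg hLpos.le _)
      _ = p * L^(p-1) * ∫ r in Ioo (0:ℝ) R, H r := by ring
      _ ≤ A + (p-1) * (L^p * B) := ineq2
  have : L^p * B ≤ A := by nlinarith
  exact this
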